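/- If B and A are sequences of integers with cost(B) ≥ 0, cost(A) ≥ 0, and fall(B) ≥ fall(A), then for any sequences S₁, S₂, height(S₁ B A S₂) ≤ height(S₁ A B S₂), where fall(H) = height(H) − cost(H). -/
import Mathlib


def cost (L : List ℤ) : ℤ := L.sum

def height (L : List ℤ) : ℤ :=
  ((List.range (L.length + 1)).map fun k => (L.take k).sum).foldr max 0

def fall (L : List ℤ) : ℤ := height L - cost L

def height' : List ℤ → ℤ
  | [] => 0
  | a :: l => max 0 (a + height' l)

lemma height'_nonneg (L : List ℤ) : 0 ≤ height' L := by
  cases L <;> simp [height']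

lemma foldr_max_map_add (a c : ℤ) (xs : List ℤ) :
    (xs.map (a + ·)).foldr max c = a + xs.foldr max (c - a) := by
  induction xs with
  | nil => simp
  | cons x xs ih => simp [ih]

lemma foldr_max_prefix (l : List ℤ) (c : ℤ) :
    ((List.range (l.length + 1)).map fun k => (l.take k).sum).foldr max c
      = max c (height' l) := by
  induction l generalizing c with
  | nil => simp [height']; omega
  | cons a l ih =>
      have : List.range (l.length + 1 + 1)
          = 0 :: (List.range (l.length + 1)).map (· + 1) := by
        rw [List.range_succ_eq_map]
      rw [List.length_cons, this]
      simp only [List.map_cons, List.map_map, List.foldr_cons]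
      have hmap : ((List.range (l.length + 1)).map
            ((fun k => ((a :: l).take k).sum) ∘ (· + 1)))
          = ((List.range (l.length + 1)).map fun k => (l.take k).sum).map (a + ·) := by
        simp [Function.comp, List.map_map]
      rw [hmap, foldr_max_map_add, ih]
      simp only [height', List.take_zero, List.sum_nil]
      omega

lemma height_eq_height' (L : List ℤ) : height L = height' L := by
  rw [height, foldr_max_prefix]
  have := height'_nonneg L
  omega

lemma height'_append (X Y : List ℤ) :
    height' (X ++ Y) = max (height' X) (X.sum + height' Y) := by
  induction X with
  | nil =>
      have := height'_nonneg Y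
      simp [height']
      omega
  | cons a X ih =>
      rw [List.cons_append]
      have h1 : height' (a :: (X ++ Y)) = max 0 (a + height' (X ++ Y)) := rfl
      have h2 : height' (a :: X) = max 0 (a + height' X) := rfl
      rw [h1, h2, ih, List.sum_cons]
      omega

theorem exchange_nonneg_nonneg (B A S₁ S₂ : List ℤ)
    (hB : 0 ≤ cost B) (hA : 0 ≤ cost A) (hBA : fall A ≤ fall B) :
    height (S₁ ++ B ++ A ++ S₂) ≤ height (S₁ ++ A ++ B ++ S₂) := by
  simp only [fall, cost, height_eq_height'] at *
  rw [List.append_assoc, List.append_assoc, List.append_assoc, List.append_assoc]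
  rw [height'_append, height'_append, height'_append, height'_append,
    height'_append, height'_append]
  have h1 := height'_nonneg S₂
  omega
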